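/- For every nonnegative integer K, every p with 1 ≤ p ≤ ∞, and all K-order networks N_X, N_Y, N_Z, the p-norm network distance satisfies the triangle inequality d_{N,p}(N_X,N_Y) ≤ d_{N,p}(N_X,N_Z) + d_{N,p}(N_Z,N_Y). -/

import Mathlib

open scoped ENNReal

/-- A correspondence between node sets `X` and `Y`: a set of pairs in which every
`x : X` and every `y : Y` appears. -/
def IsCorrespondence {X Y : Type} (C : Set (X × Y)) : Prop :=
  (∀ x : X, ∃ y : Y, (x, y) ∈ C) ∧ (∀ y : Y, ∃ x : X, (x, y) ∈ C)

/-- The rank of a tuple: the number of distinct elements appearing in it. -/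
noncomputable def tupleRank {X : Type} {n : ℕ} (t : Fin n → X) : ℕ :=
  Set.ncard (Set.range t)

/-- A `K`-order network on a finite nonempty node set `X`: relationship functions
`r k : X^{k+1} → [0,1]` for `0 ≤ k ≤ K`, symmetric under permutations of the arguments,
and such that any subtuple with the same set of distinct elements as the full tuple
carries the same relationship value. -/
structure HONetwork (K : ℕ) (X : Type) [Fintype X] [Nonempty X] : Type where
  r : ∀ k : ℕ, (Fin (k + 1) → X) → ℝ
  r_nonneg : ∀ k, k ≤ K → ∀ t : Fin (k + 1) → X, 0 ≤ r k t
  r_le_one : ∀ k, k ≤ K → ∀ t : Fin (k + 1) → X, r k t ≤ 1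
  symm : ∀ k, k ≤ K → ∀ (t : Fin (k + 1) → X) (σ : Equiv.Perm (Fin (k + 1))),
    r k (t ∘ σ) = r k t
  identity : ∀ k, k ≤ K → ∀ k', k' ≤ K → ∀ (t : Fin (k + 1) → X)
    (ι : Fin (k' + 1) → Fin (k + 1)), StrictMono ι →
    Set.range (t ∘ ι) = Set.range t → r k' (t ∘ ι) = r k t

/-- The `k`-order network difference `Γ^k_{X,Y}(C)`: the largest value of
`|r_X^k(x_{0:k}) − r_Y^k(y_{0:k})|` over tuples of pairs of correspondents in `C`. -/
noncomputable def Gamma {K : ℕ} {X Y : Type} [Fintype X] [Nonempty X] [Fintype Y] [Nonempty Y]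
    (NX : HONetwork K X) (NY : HONetwork K Y) (k : ℕ) (C : Set (X × Y)) : ℝ :=
  sSup { v : ℝ | ∃ (tx : Fin (k + 1) → X) (ty : Fin (k + 1) → Y),
    (∀ i, (tx i, ty i) ∈ C) ∧ v = |NX.r k tx - NY.r k ty| }

/-- The `k`-order network distance: minimum of `Γ^k_{X,Y}(C)` over correspondences `C`. -/
noncomputable def dN {K : ℕ} {X Y : Type} [Fintype X] [Nonempty X] [Fintype Y] [Nonempty Y]
    (k : ℕ) (NX : HONetwork K X) (NY : HONetwork K Y) : ℝ :=
  sInf { v : ℝ | ∃ C : Set (X × Y), IsCorrespondence C ∧ v = Gamma NX NY k C }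

/-- The `p`-norm of a vector in `ℝ^{K+1}`, `1 ≤ p ≤ ∞`. -/
noncomputable def pNorm (K : ℕ) (p : ℝ≥0∞) [Fact (1 ≤ p)] (v : Fin (K + 1) → ℝ) : ℝ :=
  ‖(WithLp.equiv p (Fin (K + 1) → ℝ)).symm v‖

/-- The `p`-norm network distance: minimum over correspondences `C` of the `p`-norm of the
vector `(Γ^0_{X,Y}(C), …, Γ^K_{X,Y}(C))`. -/
noncomputable def dNp {K : ℕ} {X Y : Type} [Fintype X] [Nonempty X] [Fintype Y] [Nonempty Y]
    (p : ℝ≥0∞) [Fact (1 ≤ p)] (NX : HONetwork K X) (NY : HONetwork K Y) : ℝ :=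
  sInf { v : ℝ | ∃ C : Set (X × Y), IsCorrespondence C ∧
    v = pNorm K p (fun k : Fin (K + 1) => Gamma NX NY (k : ℕ) C) }

/-- Two `K`-order networks are `k`-isomorphic if a bijection of the node sets preserves the
`k`-order relationship functions. -/
def kIsomorphic {K : ℕ} {X Y : Type} [Fintype X] [Nonempty X] [Fintype Y] [Nonempty Y]
    (k : ℕ) (NX : HONetwork K X) (NY : HONetwork K Y) : Prop :=
  ∃ φ : X ≃ Y, ∀ t : Fin (k + 1) → X, NY.r k (fun i => φ (t i)) = NX.r k t

/-- Two `K`-order networks are isomorphic if a bijection of the node sets preserves the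
`k`-order relationship functions for all `0 ≤ k ≤ K`. -/
def Isomorphic {K : ℕ} {X Y : Type} [Fintype X] [Nonempty X] [Fintype Y] [Nonempty Y]
    (NX : HONetwork K X) (NY : HONetwork K Y) : Prop :=
  ∃ φ : X ≃ Y, ∀ k, k ≤ K → ∀ t : Fin (k + 1) → X, NY.r k (fun i => φ (t i)) = NX.r k t

/-- A `K`-order dissimilarity network: a `K`-order network whose relationship functions
decompose as `r^k = d^k + ε · rank`, with nonnegative dissimilarity functions `d^k`
satisfying the order increasing property, and `0 < ε ≤ 1 − (1/K) · max d^K`. -/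
structure DissimNetwork (K : ℕ) (X : Type) [Fintype X] [Nonempty X]
    extends HONetwork K X where
  dfun : ∀ k : ℕ, (Fin (k + 1) → X) → ℝ
  eps : ℝ
  dfun_nonneg : ∀ k, k ≤ K → ∀ t : Fin (k + 1) → X, 0 ≤ dfun k t
  decomp : ∀ k, k ≤ K → ∀ t : Fin (k + 1) → X,
    r k t = dfun k t + eps * (tupleRank t : ℝ)
  order_incr : ∀ k : ℕ, k + 1 ≤ K → ∀ t : Fin (k + 2) → X,
    dfun k (fun i : Fin (k + 1) => t i.castSucc) ≤ dfun (k + 1) t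
  eps_pos : 0 < eps
  eps_le : ∀ t : Fin (K + 1) → X, eps ≤ 1 - (1 / (K : ℝ)) * dfun K t

/-- A `K`-order proximity network: a `K`-order network whose relationship functions
decompose as `r^k = p^k − ε · rank`, with nonnegative proximity functions `p^k`
satisfying the order decreasing property, and `0 < ε ≤ (1/K) · min p^K`. -/
structure ProxNetwork (K : ℕ) (X : Type) [Fintype X] [Nonempty X]
    extends HONetwork K X where
  pfun : ∀ k : ℕ, (Fin (k + 1) → X) → ℝ
  eps : ℝ
  pfun_nonneg : ∀ k, k ≤ K → ∀ t : Fin (k + 1) → X, 0 ≤ pfun k t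
  decomp : ∀ k, k ≤ K → ∀ t : Fin (k + 1) → X,
    r k t = pfun k t - eps * (tupleRank t : ℝ)
  order_decr : ∀ k : ℕ, k + 1 ≤ K → ∀ t : Fin (k + 2) → X,
    pfun (k + 1) t ≤ pfun k (fun i : Fin (k + 1) => t i.castSucc)
  eps_pos : 0 < eps
  eps_le : ∀ t : Fin (K + 1) → X, eps ≤ (1 / (K : ℝ)) * pfun K t

/-!
Composing a correspondence between `X` and `Z` with one between `Z` and `Y` gives a
correspondence between `X` and `Y`. Routing each tuple through intermediate points of `Z`, the
triangle inequality in `ℝ` bounds every `Γ^k` of the composite by the sum of the two `Γ^k`;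
monotonicity and the triangle inequality of the `p`-norm on nonnegative vectors then bound
`‖Γ‖_p` of the composite, and taking infima over both correspondences gives the claim.
-/

open scoped SetRel

lemma PiLp.norm_mono {ι : Type*} [Fintype ι] {β : ι → Type*} [∀ i, NormedAddCommGroup (β i)]
    {p : ℝ≥0∞} (hp : p ≠ 0) {x y : PiLp p β} (h : ∀ i, ‖x i‖ ≤ ‖y i‖) : ‖x‖ ≤ ‖y‖ := by
  have := lp.norm_mono hp (x := Equiv.lpPiLp.symm x) (y := Equiv.lpPiLp.symm y) h
  rwa [← equiv_lpPiLp_norm, ← equiv_lpPiLp_norm (Equiv.lpPiLp.symm y), Equiv.apply_symm_apply,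
    Equiv.apply_symm_apply] at this

section pNorm

variable {K : ℕ} {p : ℝ≥0∞} [Fact (1 ≤ p)]

lemma pNorm_nonneg (v : Fin (K + 1) → ℝ) : 0 ≤ pNorm K p v := norm_nonneg _

lemma pNorm_mono {v w : Fin (K + 1) → ℝ} (hv : 0 ≤ v) (hvw : v ≤ w) : pNorm K p v ≤ pNorm K p w :=
  PiLp.norm_mono (zero_lt_one.trans_le Fact.out).ne' fun i ↦ by
    simpa [abs_of_nonneg (hv i), abs_of_nonneg ((hv i).trans (hvw i))] using hvw i

lemma pNorm_add_le (v w : Fin (K + 1) → ℝ) : pNorm K p (v + w) ≤ pNorm K p v + pNorm K p w :=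
  norm_add_le _ _

end pNorm

section Correspondence

variable {X Y Z : Type}

lemma IsCorrespondence.univ [Nonempty X] [Nonempty Y] :
    IsCorrespondence (Set.univ : Set (X × Y)) :=
  ⟨fun _ ↦ ⟨Classical.arbitrary Y, trivial⟩, fun _ ↦ ⟨Classical.arbitrary X, trivial⟩⟩

lemma IsCorrespondence.comp {C₁ : Set (X × Z)} {C₂ : Set (Z × Y)}
    (h₁ : IsCorrespondence C₁) (h₂ : IsCorrespondence C₂) : IsCorrespondence (C₁ ○ C₂) := by
  refine ⟨fun x ↦ ?_, fun y ↦ ?_⟩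
  · obtain ⟨z, hxz⟩ := h₁.1 x
    obtain ⟨y, hzy⟩ := h₂.1 z
    exact ⟨y, z, hxz, hzy⟩
  · obtain ⟨z, hzy⟩ := h₂.2 y
    obtain ⟨x, hxz⟩ := h₁.2 z
    exact ⟨x, z, hxz, hzy⟩

end Correspondence

section Gamma

variable {K : ℕ} {X Y Z : Type} [Fintype X] [Nonempty X] [Fintype Y] [Nonempty Y]
  [Fintype Z] [Nonempty Z] (NX : HONetwork K X) (NY : HONetwork K Y) (NZ : HONetwork K Z)

lemma Gamma_nonneg (k : ℕ) (C : Set (X × Y)) : 0 ≤ Gamma NX NY k C :=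
  Real.sSup_nonneg <| by
    rintro _ ⟨tx, ty, -, rfl⟩
    exact abs_nonneg _

lemma abs_sub_le_Gamma {k : ℕ} (hk : k ≤ K) {C : Set (X × Y)} {tx : Fin (k + 1) → X}
    {ty : Fin (k + 1) → Y} (h : ∀ i, (tx i, ty i) ∈ C) :
    |NX.r k tx - NY.r k ty| ≤ Gamma NX NY k C := by
  refine le_csSup ⟨1, ?_⟩ ⟨tx, ty, h, rfl⟩
  rintro _ ⟨sx, sy, -, rfl⟩
  have := NX.r_nonneg k hk sx
  have := NX.r_le_one k hk sx
  have := NY.r_nonneg k hk sy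
  have := NY.r_le_one k hk sy
  exact abs_sub_le_iff.2 ⟨by linarith, by linarith⟩

lemma Gamma_comp_le {k : ℕ} (hk : k ≤ K) (C₁ : Set (X × Z)) (C₂ : Set (Z × Y)) :
    Gamma NX NY k (C₁ ○ C₂) ≤ Gamma NX NZ k C₁ + Gamma NZ NY k C₂ := by
  refine Real.sSup_le ?_ (add_nonneg (Gamma_nonneg NX NZ k C₁) (Gamma_nonneg NZ NY k C₂))
  rintro _ ⟨tx, ty, hmem, rfl⟩
  choose tz hxz hzy using hmem
  calc |NX.r k tx - NY.r k ty|
      ≤ |NX.r k tx - NZ.r k tz| + |NZ.r k tz - NY.r k ty| := abs_sub_le _ _ _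
    _ ≤ Gamma NX NZ k C₁ + Gamma NZ NY k C₂ :=
        add_le_add (abs_sub_le_Gamma NX NZ hk hxz) (abs_sub_le_Gamma NZ NY hk hzy)

variable (p : ℝ≥0∞) [Fact (1 ≤ p)]

lemma pNorm_Gamma_comp_le (C₁ : Set (X × Z)) (C₂ : Set (Z × Y)) :
    pNorm K p (fun k : Fin (K + 1) ↦ Gamma NX NY k (C₁ ○ C₂)) ≤
      pNorm K p (fun k : Fin (K + 1) ↦ Gamma NX NZ k C₁) +
        pNorm K p (fun k : Fin (K + 1) ↦ Gamma NZ NY k C₂) :=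
  (pNorm_mono (fun k ↦ Gamma_nonneg NX NY k _)
    (fun k ↦ Gamma_comp_le NX NY NZ (Nat.le_of_lt_succ k.isLt) C₁ C₂)).trans
    (pNorm_add_le _ _)

def dNpValues : Set ℝ :=
  {v | ∃ C : Set (X × Y), IsCorrespondence C ∧
    v = pNorm K p (fun k : Fin (K + 1) ↦ Gamma NX NY k C)}

lemma dNp_eq_sInf : dNp p NX NY = sInf (dNpValues NX NY p) := rfl

lemma dNpValues_nonempty : (dNpValues NX NY p).Nonempty :=
  ⟨_, Set.univ, IsCorrespondence.univ, rfl⟩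

lemma dNpValues_bddBelow : BddBelow (dNpValues NX NY p) := by
  refine ⟨0, ?_⟩
  rintro _ ⟨C, -, rfl⟩
  exact pNorm_nonneg _

lemma dNp_le_pNorm_Gamma {C : Set (X × Y)} (hC : IsCorrespondence C) :
    dNp p NX NY ≤ pNorm K p (fun k : Fin (K + 1) ↦ Gamma NX NY k C) :=
  csInf_le (dNpValues_bddBelow NX NY p) ⟨C, hC, rfl⟩

end Gamma

/-- the `p`-norm network distance satisfies the triangle inequality. -/
theorem dNp_triangle (K : ℕ) (p : ℝ≥0∞) [Fact (1 ≤ p)]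
    (X Y Z : Type) [Fintype X] [Nonempty X] [Fintype Y] [Nonempty Y] [Fintype Z] [Nonempty Z]
    (NX : HONetwork K X) (NY : HONetwork K Y) (NZ : HONetwork K Z) :
    dNp p NX NY ≤ dNp p NX NZ + dNp p NZ NY := by
  rw [dNp_eq_sInf NX NZ, dNp_eq_sInf NZ NY, ← csInf_add (dNpValues_nonempty NX NZ p)
    (dNpValues_bddBelow NX NZ p) (dNpValues_nonempty NZ NY p) (dNpValues_bddBelow NZ NY p)]
  refine le_csInf ((dNpValues_nonempty NX NZ p).add (dNpValues_nonempty NZ NY p)) ?_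
  rintro _ ⟨_, ⟨C₁, hC₁, rfl⟩, _, ⟨C₂, hC₂, rfl⟩, rfl⟩
  exact (dNp_le_pNorm_Gamma NX NY p (hC₁.comp hC₂)).trans (pNorm_Gamma_comp_le NX NY NZ p C₁ C₂)
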